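/- arXiv:1508.00161 — 8 statements merged into one kernel-verified Lean document; each statement's English description precedes it below -/
import Mathlib

section
/- If a is a legal toppling sequence and b is a complete toppling sequence for the same initial chip configuration on a graph, then for every vertex x, the number of occurrences of x in a is at most the number of occurrences of x in b. -/
/-- Topple at vertex `x`: remove `d(x) = (succ x).card` chips from `x` and add one chip
to each out-neighbour of `x`. Topplings at stable vertices are allowed. -/
def toppleStep {V : Type*} [DecidableEq V] (succ : V → Finset V) (c : V → ℤ) (x : V) :
    V → ℤ :=
  fun v => c v - (if v = x then ((succ x).card : ℤ) else 0) + (if v ∈ succ x then 1 else 0)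

/-- The configuration after performing the first `n` steps of the (possibly infinite)
toppling sequence `a`; `a n = none` means no toppling at step `n`. -/
def confAt {V : Type*} [DecidableEq V] (succ : V → Finset V) (c0 : V → ℤ)
    (a : ℕ → Option V) : ℕ → V → ℤ
  | 0 => c0
  | n + 1 =>
    match a n with
    | none => confAt succ c0 a n
    | some x => toppleStep succ (confAt succ c0 a n) x

/-- A vertex is unstable in configuration `c` if it has at least `d(x)` chips. -/
def Unstable {V : Type*} (succ : V → Finset V) (c : V → ℤ) (x : V) : Prop :=
  ((succ x).card : ℤ) ≤ c x

/-- A toppling sequence is legal if every toppled vertex is unstable when toppled. -/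
def LegalSeq {V : Type*} [DecidableEq V] (succ : V → Finset V) (c0 : V → ℤ)
    (a : ℕ → Option V) : Prop :=
  ∀ n x, a n = some x → Unstable succ (confAt succ c0 a n) x

/-- A toppling sequence is complete if any vertex that is unstable at some time is
toppled at least once afterward. -/
def CompleteSeq {V : Type*} [DecidableEq V] (succ : V → Finset V) (c0 : V → ℤ)
    (a : ℕ → Option V) : Prop :=
  ∀ n x, Unstable succ (confAt succ c0 a n) x → ∃ m, n ≤ m ∧ a m = some x

/-- The number of occurrences (possibly `⊤`) of vertex `x` in the sequence `a`. -/
noncomputable def occCount {V : Type*} (a : ℕ → Option V) (x : V) : ℕ∞ :=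
  {n | a n = some x}.encard

section ChipAux
variable {V : Type*} [DecidableEq V] (succ : V → Finset V)

private def delta (y : V) : V → ℤ :=
  fun v => (if v ∈ succ y then 1 else 0) - (if v = y then ((succ y).card : ℤ) else 0)

private lemma toppleStep_eq (c : V → ℤ) (y v : V) :
    toppleStep succ c y v = c v + delta succ y v := by
  unfold toppleStep delta; ring

private lemma delta_nonneg {y v : V} (h : v ≠ y) : 0 ≤ delta succ y v := by
  unfold delta
  simp [h]
  split <;> norm_num

private lemma confAt_zero (c0 : V → ℤ) (a : ℕ → Option V) : confAt succ c0 a 0 = c0 := rfl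

private lemma confAt_succ_none (c0 : V → ℤ) (a : ℕ → Option V) {n : ℕ} (h : a n = none) :
    confAt succ c0 a (n+1) = confAt succ c0 a n := by
  simp [confAt, h]

private lemma confAt_succ_some (c0 : V → ℤ) (a : ℕ → Option V) {n : ℕ} {x : V}
    (h : a n = some x) :
    confAt succ c0 a (n+1) = toppleStep succ (confAt succ c0 a n) x := by
  simp [confAt, h]

/-- An unstable vertex stays unstable until it is toppled. -/
private lemma unstable_persist (c0 : V → ℤ) (a : ℕ → Option V) (y : V) {t u : ℕ}
    (htu : t ≤ u) (h : ∀ s, t ≤ s → s < u → a s ≠ some y)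
    (hU : Unstable succ (confAt succ c0 a t) y) :
    Unstable succ (confAt succ c0 a u) y := by
  induction u, htu using Nat.le_induction with
  | base => exact hU
  | succ u htu ih =>
    have hu := ih (fun s hs hs' => h s hs (by omega))
    unfold Unstable at *
    cases hz : a u with
    | none => rw [confAt_succ_none succ c0 a hz]; exact hu
    | some z =>
      have hzne : y ≠ z := fun he => h u htu (by omega) (he ▸ hz)
      rw [confAt_succ_some succ c0 a hz, toppleStep_eq]
      have := delta_nonneg succ (y := z) hzne
      linarith

private lemma confAt_shift (c0 : V → ℤ) (a : ℕ → Option V) (j : ℕ) :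
    ∀ k, confAt succ (confAt succ c0 a j) (fun i => a (i + j)) k = confAt succ c0 a (k + j) := by
  intro k
  induction k with
  | zero => simp [confAt_zero]
  | succ k ih =>
    have harith : k + 1 + j = (k + j) + 1 := by omega
    rw [harith]
    cases hz : a (k + j) with
    | none =>
      rw [confAt_succ_none succ c0 a hz, ← ih,
        confAt_succ_none succ _ (fun i => a (i + j)) (n := k) hz]
    | some z =>
      rw [confAt_succ_some succ c0 a hz, ← ih,
        confAt_succ_some succ _ (fun i => a (i + j)) (n := k) hz]

private lemma confAt_of_none (c0 : V → ℤ) (a : ℕ → Option V) :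
    ∀ i, (∀ j < i, a j = none) → confAt succ c0 a i = c0 := by
  intro i
  induction i with
  | zero => intro _; rfl
  | succ i ih =>
    intro h
    rw [confAt_succ_none succ c0 a (h i (by omega))]
    exact ih (fun j hj => h j (by omega))

/-- The sequence `b` with the toppling at time `m` deleted. -/
private def del (b : ℕ → Option V) (m : ℕ) : ℕ → Option V :=
  fun k => if k < m then b k else b (k+1)

variable {succ}

private lemma conf_del_le (c0 : V → ℤ) (b : ℕ → Option V) {m : ℕ} {y : V}
    (hm : b m = some y) :
    ∀ t, t ≤ m → ∀ v, confAt succ (toppleStep succ c0 y) (del b m) t v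
      = confAt succ c0 b t v + delta succ y v := by
  intro t
  induction t with
  | zero => intro _ v; rw [confAt_zero, confAt_zero, toppleStep_eq]
  | succ t ih =>
    intro ht v
    have htm : t < m := by omega
    have hbt : del b m t = b t := by simp [del, htm]
    cases hz : b t with
    | none =>
      rw [confAt_succ_none succ c0 b hz, confAt_succ_none succ _ _ (hbt.trans hz)]
      exact ih (by omega) v
    | some z =>
      rw [confAt_succ_some succ c0 b hz, confAt_succ_some succ _ _ (hbt.trans hz),
        toppleStep_eq, toppleStep_eq, ih (by omega) v]
      ring

private lemma conf_del_ge (c0 : V → ℤ) (b : ℕ → Option V) {m : ℕ} {y : V}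
    (hm : b m = some y) :
    ∀ t, m ≤ t → confAt succ (toppleStep succ c0 y) (del b m) t
      = confAt succ c0 b (t+1) := by
  intro t ht
  induction t, ht using Nat.le_induction with
  | base =>
    funext v
    rw [conf_del_le c0 b hm m le_rfl v, confAt_succ_some succ c0 b hm, toppleStep_eq]
  | succ t ht ih =>
    have hbt : del b m t = b (t+1) := by simp [del, show ¬ t < m by omega]
    cases hz : b (t+1) with
    | none =>
      rw [confAt_succ_none succ c0 b hz, confAt_succ_none succ _ _ (hbt.trans hz), ih]
    | some z =>
      rw [confAt_succ_some succ c0 b hz, confAt_succ_some succ _ _ (hbt.trans hz), ih]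

private lemma complete_del (c0 : V → ℤ) (b : ℕ → Option V) {m : ℕ} {y : V}
    (hm : b m = some y) (hb : CompleteSeq succ c0 b) :
    CompleteSeq succ (toppleStep succ c0 y) (del b m) := by
  intro t z hz
  by_cases htm : t ≤ m
  · by_cases hex : ∃ s, t ≤ s ∧ s < m ∧ del b m s = some z
    · obtain ⟨s, hs1, _, hs3⟩ := hex
      exact ⟨s, hs1, hs3⟩
    · push_neg at hex
      have hz' : Unstable succ (confAt succ (toppleStep succ c0 y) (del b m) m) z :=
        unstable_persist succ _ _ z htm (fun s hs hs' he => hex s hs hs' he) hz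
      rw [conf_del_ge c0 b hm m le_rfl] at hz'
      obtain ⟨m', hm1, hm2⟩ := hb (m+1) z hz'
      refine ⟨m' - 1, by omega, ?_⟩
      have h1 : ¬ (m' - 1 < m) := by omega
      have h2 : m' - 1 + 1 = m' := by omega
      simp only [del, h1, if_false, h2]
      exact hm2
  · push_neg at htm
    rw [conf_del_ge c0 b hm t (le_of_lt htm)] at hz
    obtain ⟨m', hm1, hm2⟩ := hb (t+1) z hz
    refine ⟨m' - 1, by omega, ?_⟩
    have h1 : ¬ (m' - 1 < m) := by omega
    have h2 : m' - 1 + 1 = m' := by omega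
    simp only [del, h1, if_false, h2]
    exact hm2

private lemma occ_del (b : ℕ → Option V) {m : ℕ} {y : V} (hm : b m = some y) (x : V) :
    occCount (del b m) x + (if x = y then 1 else 0) ≤ occCount b x := by
  classical
  set f : ℕ → ℕ := fun k => if k < m then k else k + 1 with hf
  have hfinj : Function.Injective f := by
    have hsm : StrictMono f := by
      intro k l hkl
      simp only [hf]
      split <;> split <;> omega
    exact hsm.injective
  set S : Set ℕ := {k | del b m k = some x} with hS
  have hmem : ∀ k ∈ S, b (f k) = some x := by
    intro k hk
    simp only [hS, Set.mem_setOf_eq, del] at hk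
    by_cases h : k < m
    · simpa [hf, h] using hk
    · simpa [hf, h] using hk
  have hfm : ∀ k, f k ≠ m := by intro k; simp only [hf]; split <;> omega
  have himg : f '' S ⊆ {k | b k = some x} := by
    rintro _ ⟨k, hk, rfl⟩
    exact hmem k hk
  have hcard : (f '' S).encard = S.encard := hfinj.encard_image S
  by_cases hxy : x = y
  · subst hxy
    have hins : insert m (f '' S) ⊆ {k | b k = some x} := by
      rw [Set.insert_subset_iff]
      exact ⟨hm, himg⟩
    have hnm : m ∉ f '' S := by rintro ⟨k, _, hk⟩; exact hfm k hk
    calc occCount (del b m) x + (if x = x then 1 else 0)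
        = S.encard + 1 := by rw [if_pos rfl]; rfl
      _ = (f '' S).encard + 1 := by rw [hcard]
      _ = (insert m (f '' S)).encard := (Set.encard_insert_of_notMem hnm).symm
      _ ≤ {k | b k = some x}.encard := Set.encard_mono hins
      _ = occCount b x := rfl
  · calc occCount (del b m) x + (if x = y then 1 else 0)
        = S.encard := by rw [if_neg hxy, add_zero]; rfl
      _ = (f '' S).encard := hcard.symm
      _ ≤ {k | b k = some x}.encard := Set.encard_mono himg
      _ = occCount b x := rfl

private lemma main_induction :
    ∀ n : ℕ, ∀ (c0 : V → ℤ) (a b : ℕ → Option V),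
      LegalSeq succ c0 a → CompleteSeq succ c0 b → ∀ x : V,
      ({j | j < n ∧ a j = some x}).encard ≤ occCount b x := by
  intro n
  induction n using Nat.strong_induction_on with
  | _ n IH =>
    intro c0 a b ha hb x
    by_cases hnone : ∀ j < n, a j = none
    · have hempty : {j | j < n ∧ a j = some x} = ∅ := by
        ext j
        simp only [Set.mem_setOf_eq, Set.mem_empty_iff_false, iff_false, not_and]
        intro hj
        simp [hnone j hj]
      simp [hempty]
    · push_neg at hnone
      obtain ⟨j0, hj0n, hj0⟩ := hnone
      classical
      have hex : ∃ i, a i ≠ none := ⟨j0, hj0⟩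
      set i := Nat.find hex with hi
      have hispec : a i ≠ none := Nat.find_spec hex
      have hilt : i < n := lt_of_le_of_lt (Nat.find_min' hex hj0) hj0n
      have hmin : ∀ j < i, a j = none := by
        intro j hj
        by_contra hc
        exact absurd (Nat.find_min' hex hc) (by omega)
      obtain ⟨y, hy⟩ := Option.ne_none_iff_exists'.mp hispec
      -- y is unstable in c0
      have hc0 : confAt succ c0 a i = c0 := confAt_of_none succ c0 a i hmin
      have hyU : Unstable succ c0 y := hc0 ▸ ha i y hy
      -- the shifted sequence a' is legal for c1 = toppleStep succ c0 y
      set c1 : V → ℤ := toppleStep succ c0 y with hc1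
      set a' : ℕ → Option V := fun k => a (k + (i+1)) with ha'
      have hconf1 : confAt succ c0 a (i+1) = c1 := by
        rw [confAt_succ_some succ c0 a hy, hc0]
      have hshift : ∀ k, confAt succ c1 a' k = confAt succ c0 a (k + (i+1)) := by
        intro k
        rw [← hconf1]
        exact confAt_shift succ c0 a (i+1) k
      have ha'legal : LegalSeq succ c1 a' := by
        intro k z hz
        rw [hshift k]
        exact ha (k + (i+1)) z hz
      -- get an occurrence of y in b
      have hbU : Unstable succ (confAt succ c0 b 0) y := by rw [confAt_zero]; exact hyU
      obtain ⟨m, -, hm⟩ := hb 0 y hbU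
      -- the deleted sequence is complete for c1
      have hb'complete : CompleteSeq succ c1 (del b m) := complete_del c0 b hm hb
      -- apply IH
      have hIH := IH (n - (i+1)) (by omega) c1 a' (del b m) ha'legal hb'complete x
      -- relate the prefix sets
      set S : Set ℕ := {j | j < n ∧ a j = some x} with hSdef
      set S' : Set ℕ := {k | k < n - (i+1) ∧ a' k = some x} with hS'def
      have hsub : S ⊆ insert i ((fun k => k + (i+1)) '' S') := by
        intro j hj
        obtain ⟨hjn, hjx⟩ := hj
        rcases lt_trichotomy j i with hji | rfl | hji
        · rw [hmin j hji] at hjx; exact absurd hjx (by simp)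
        · exact Set.mem_insert _ _
        · refine Set.mem_insert_of_mem _ ⟨j - (i+1), ⟨by omega, ?_⟩, ?_⟩
          · show a (j - (i+1) + (i+1)) = some x
            rw [show j - (i+1) + (i+1) = j by omega]
            exact hjx
          · show j - (i+1) + (i+1) = j
            omega
      have himgcard : ((fun k => k + (i+1)) '' S').encard = S'.encard :=
        (add_left_injective (i+1)).encard_image S'
      by_cases hxy : x = y
      · subst hxy
        have hocc := occ_del b hm x
        rw [if_pos rfl] at hocc
        calc S.encard ≤ (insert i ((fun k => k + (i+1)) '' S')).encard :=
              Set.encard_mono hsub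
          _ ≤ ((fun k => k + (i+1)) '' S').encard + 1 := Set.encard_insert_le _ _
          _ = S'.encard + 1 := by rw [himgcard]
          _ ≤ occCount (del b m) x + 1 := by exact add_le_add_left hIH 1
          _ ≤ occCount b x := hocc
      · have hsub2 : S ⊆ (fun k => k + (i+1)) '' S' := by
          intro j hj
          rcases hsub hj with h | h
          · exfalso; rw [h] at hj; rw [hj.2] at hy
            exact hxy (Option.some_injective _ hy)
          · exact h
        have hocc := occ_del b hm x
        rw [if_neg hxy, add_zero] at hocc
        calc S.encard ≤ ((fun k => k + (i+1)) '' S').encard := Set.encard_mono hsub2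
          _ = S'.encard := himgcard
          _ ≤ occCount (del b m) x := hIH
          _ ≤ occCount b x := hocc

end ChipAux

/-- If `a` is legal and `b` is complete (for the same initial configuration), then every
vertex occurs in `a` at most as often as in `b`. -/
theorem legal_le_complete {V : Type*} [DecidableEq V] (succ : V → Finset V) (c0 : V → ℤ)
    (a b : ℕ → Option V) (ha : LegalSeq succ c0 a) (hb : CompleteSeq succ c0 b) (x : V) :
    occCount a x ≤ occCount b x := by
  have hmain := main_induction (succ := succ)
  by_cases htop : occCount b x = ⊤
  · rw [htop]; exact le_top
  · obtain ⟨k, hk⟩ : ∃ k : ℕ, occCount b x = (k : ℕ∞) := by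
      lift occCount b x to ℕ using htop with k
      exact ⟨k, rfl⟩
    rw [occCount]
    by_contra hlt
    push_neg at hlt
    rw [hk] at hlt
    have hk1 : ((k + 1 : ℕ) : ℕ∞) ≤ {n | a n = some x}.encard := by
      push_cast
      exact ENat.add_one_le_iff (by simp) |>.mpr hlt
    obtain ⟨t, hts, htc⟩ := Set.exists_subset_encard_eq hk1
    have htfin : t.Finite := Set.finite_of_encard_eq_coe htc
    obtain ⟨N, hN⟩ := htfin.bddAbove
    have htsub : t ⊆ {j | j < N + 1 ∧ a j = some x} := by
      intro j hj
      exact ⟨by have := hN hj; omega, hts hj⟩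
    have := calc ((k + 1 : ℕ) : ℕ∞) = t.encard := htc.symm
      _ ≤ ({j | j < N + 1 ∧ a j = some x}).encard := Set.encard_mono htsub
      _ ≤ occCount b x := hmain (N + 1) c0 a b ha hb x
      _ = (k : ℕ∞) := hk
    rw [Nat.cast_le] at this
    omega
end

section
/- If a and b are both legal and complete toppling sequences for the same initial chip configuration, then for every vertex x, the number of occurrences of x in a equals the number of occurrences of x in b. -/
section Aux

variable {V : Type*} [DecidableEq V]

/-- Number of occurrences of `x` among the first `n` entries of `a`. -/
def pcount (a : ℕ → Option V) (n : ℕ) (x : V) : ℕ :=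
  ((Finset.range n).filter (fun i => a i = some x)).card

/-- The effect of one (optional) toppling on the chip count at `v`. -/
def eff (succ : V → Finset V) (o : Option V) (v : V) : ℤ :=
  match o with
  | none => 0
  | some x => (if v ∈ succ x then 1 else 0) - (if v = x then ((succ x).card : ℤ) else 0)

/-- Vertices toppled during the first `n` steps. -/
def toppledSet (a : ℕ → Option V) (n : ℕ) : Finset V :=
  (Finset.range n).biUnion fun i => (a i).toFinset

lemma mem_toppledSet {a : ℕ → Option V} {n i : ℕ} {w : V} (hi : i < n) (h : a i = some w) :
    w ∈ toppledSet a n := by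
  rw [toppledSet, Finset.mem_biUnion]
  exact ⟨i, Finset.mem_range.2 hi, by simp [h]⟩

lemma pcount_eq_zero {a : ℕ → Option V} {n : ℕ} {w : V} (h : w ∉ toppledSet a n) :
    pcount a n w = 0 := by
  rw [pcount, Finset.card_eq_zero, Finset.filter_eq_empty_iff]
  intro i hi hai
  exact h (mem_toppledSet (Finset.mem_range.1 hi) hai)

lemma pcount_mono (a : ℕ → Option V) (x : V) {N M : ℕ} (h : N ≤ M) :
    pcount a N x ≤ pcount a M x :=
  Finset.card_le_card (Finset.filter_subset_filter _ (Finset.range_subset_range.2 h))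

lemma pcount_succ (a : ℕ → Option V) (n : ℕ) (x : V) :
    pcount a (n+1) x = pcount a n x + (if a n = some x then 1 else 0) := by
  unfold pcount
  rw [Finset.range_add_one, Finset.filter_insert]
  split_ifs with h
  · rw [Finset.card_insert_of_notMem (by simp)]
  · simp

lemma confAt_eq (succ : V → Finset V) (c0 : V → ℤ) (a : ℕ → Option V) :
    ∀ n v, confAt succ c0 a n v = c0 v + ∑ i ∈ Finset.range n, eff succ (a i) v := by
  intro n
  induction n with
  | zero => intro v; simp [confAt]
  | succ n ih =>
    intro v
    rw [Finset.sum_range_succ]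
    have hstep : confAt succ c0 a (n+1) v = confAt succ c0 a n v + eff succ (a n) v := by
      cases h : a n with
      | none => simp [confAt, h, eff]
      | some x =>
        simp only [confAt, h, toppleStep, eff]
        ring
    rw [hstep, ih, add_assoc]

lemma sum_eff_eq (succ : V → Finset V) (a : ℕ → Option V) (n : ℕ) (y : V) (T : Finset V)
    (hT : ∀ i < n, ∀ w, a i = some w → w ∈ T) :
    ∑ i ∈ Finset.range n, eff succ (a i) y
      = ∑ w ∈ T, (pcount a n w : ℤ) * eff succ (some w) y := by
  have h1 : ∀ i ∈ Finset.range n,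
      eff succ (a i) y = ∑ w ∈ T, (if a i = some w then eff succ (some w) y else 0) := by
    intro i hi
    cases h : a i with
    | none => simp [eff]
    | some w0 =>
      have hw0 : w0 ∈ T := hT i (Finset.mem_range.1 hi) w0 h
      simp only [Option.some.injEq]
      rw [Finset.sum_ite_eq T w0 (fun w => eff succ (some w) y), if_pos hw0]
  rw [Finset.sum_congr rfl h1, Finset.sum_comm]
  refine Finset.sum_congr rfl fun w _ => ?_
  rw [← Finset.sum_filter, Finset.sum_const, pcount, nsmul_eq_mul]

lemma confAt_le (succ : V → Finset V) (c0 : V → ℤ) (a b : ℕ → Option V) (k N : ℕ) (y : V)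
    (h1 : ∀ w, pcount a k w ≤ pcount b N w) (h2 : pcount a k y = pcount b N y) :
    confAt succ c0 a k y ≤ confAt succ c0 b N y := by
  set T := toppledSet a k ∪ toppledSet b N with hT
  rw [confAt_eq, confAt_eq,
    sum_eff_eq succ a k y T (fun i hi w h => Finset.mem_union_left _ (mem_toppledSet hi h)),
    sum_eff_eq succ b N y T (fun i hi w h => Finset.mem_union_right _ (mem_toppledSet hi h))]
  refine add_le_add le_rfl (Finset.sum_le_sum fun w _ => ?_)
  by_cases hwy : w = y
  · subst hwy; rw [h2]
  · have he : 0 ≤ eff succ (some w) y := by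
      have : ¬ (y = w) := fun h => hwy h.symm
      simp only [eff, this, if_false, sub_zero]
      split_ifs <;> norm_num
    exact mul_le_mul_of_nonneg_right (by exact_mod_cast h1 w) he

lemma coe_pcount_le_occ (a : ℕ → Option V) (N : ℕ) (x : V) :
    (pcount a N x : ℕ∞) ≤ occCount a x := by
  rw [occCount, pcount, ← Set.encard_coe_eq_coe_finsetCard]
  refine Set.encard_mono ?_
  intro i hi
  simp only [Finset.coe_filter, Set.mem_setOf_eq] at hi ⊢
  exact hi.2

lemma exists_prefix_ge (a : ℕ → Option V) (x : V) (m : ℕ)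
    (h : (m : ℕ∞) ≤ occCount a x) : ∃ N, m ≤ pcount a N x := by
  obtain ⟨t, hts, htm⟩ := Set.exists_subset_encard_eq h
  have htf : t.Finite := Set.finite_of_encard_eq_coe htm
  refine ⟨htf.toFinset.sup id + 1, ?_⟩
  have hsub : htf.toFinset ⊆
      (Finset.range (htf.toFinset.sup id + 1)).filter (fun i => a i = some x) := by
    intro i hi
    rw [Finset.mem_filter, Finset.mem_range]
    exact ⟨Nat.lt_succ_of_le (Finset.le_sup (f := id) hi), hts (htf.mem_toFinset.1 hi)⟩
  have hcard : htf.toFinset.card = m := by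
    have h2 := htf.encard_eq_coe_toFinset_card
    rw [htm] at h2
    exact_mod_cast h2.symm
  rw [pcount, ← hcard]
  exact Finset.card_le_card hsub

lemma pcount_eq_occ (a : ℕ → Option V) (x : V) (N : ℕ) (h : ∀ n, a n = some x → n < N) :
    (pcount a N x : ℕ∞) = occCount a x := by
  rw [occCount]
  have : {n | a n = some x} = ↑((Finset.range N).filter fun i => a i = some x) := by
    ext n
    simp only [Set.mem_setOf_eq, Finset.coe_filter, Finset.mem_range]
    exact ⟨fun h' => ⟨h n h', h'⟩, And.right⟩
  rw [this, Set.encard_coe_eq_coe_finsetCard, pcount]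

lemma main_claim (succ : V → Finset V) (c0 : V → ℤ) (a b : ℕ → Option V)
    (haL : LegalSeq succ c0 a) (hbC : CompleteSeq succ c0 b) :
    ∀ k w, (pcount a k w : ℕ∞) ≤ occCount b w := by
  classical
  intro k
  induction k using Nat.strong_induction_on with
  | _ k ih =>
  intro v
  match k, ih with
  | 0, _ => simp [pcount]
  | j + 1, ih =>
  by_contra hv
  push_neg at hv
  have hQj : ∀ w, (pcount a j w : ℕ∞) ≤ occCount b w := ih j (Nat.lt_succ_self j)
  have hjv : a j = some v := by
    by_contra hne
    rw [pcount_succ, if_neg hne, add_zero] at hv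
    exact (not_lt.2 (hQj v)) hv
  rw [pcount_succ, if_pos hjv] at hv
  set p := pcount a j v with hp
  have h1 : (p : ℕ∞) ≤ occCount b v := hQj v
  have hnetop : occCount b v ≠ ⊤ := ne_top_of_lt hv
  set m := (occCount b v).toNat with hmdef
  have hm : (m : ℕ∞) = occCount b v := ENat.coe_toNat hnetop
  have hmp : m = p := by
    rw [← hm] at hv h1
    have hv' : m < p + 1 := by
      have := ENat.coe_lt_coe.mp (by exact_mod_cast hv : ((m:ℕ∞) < ((p+1:ℕ):ℕ∞)))
      exact this
    have h1' : p ≤ m := ENat.coe_le_coe.mp h1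
    omega
  have hocc : occCount b v = (p : ℕ∞) := by rw [← hm, hmp]

  have hocc' : {n | b n = some v}.encard = (p : ℕ∞) := hocc
  have hSfin : {n | b n = some v}.Finite := Set.finite_of_encard_eq_coe hocc'
  set N0 := hSfin.toFinset.sup id + 1 with hN0
  have hbound : ∀ n, b n = some v → n < N0 := fun n hn =>
    Nat.lt_succ_of_le (Finset.le_sup (f := id) (hSfin.mem_toFinset.2 hn))
  choose f hf using fun w => exists_prefix_ge b w (pcount a j w) (hQj w)
  set N := max N0 ((toppledSet a j).sup f) with hN
  have hc1 : ∀ w, pcount a j w ≤ pcount b N w := by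
    intro w
    by_cases hw : w ∈ toppledSet a j
    · exact le_trans (hf w)
        (pcount_mono b w (le_trans (Finset.le_sup hw) (le_max_right _ _)))
    · rw [pcount_eq_zero hw]; exact Nat.zero_le _
  have hc2 : pcount a j v = pcount b N v := by
    have h3 := pcount_eq_occ b v N
      (fun n hn => lt_of_lt_of_le (hbound n hn) (le_max_left _ _))
    rw [hocc] at h3
    have : pcount b N v = p := ENat.coe_inj.mp h3
    rw [this]
  have hun : Unstable succ (confAt succ c0 b N) v := by
    have hL := haL j v hjv
    exact le_trans hL (confAt_le succ c0 a b j N v hc1 hc2)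
  obtain ⟨m2, hm2, hbm2⟩ := hbC N v hun
  have h4 : m2 < N0 := hbound m2 hbm2
  have h5 : N0 ≤ N := le_max_left _ _
  omega

lemma occ_le (succ : V → Finset V) (c0 : V → ℤ) (a b : ℕ → Option V)
    (haL : LegalSeq succ c0 a) (hbC : CompleteSeq succ c0 b) (x : V) :
    occCount a x ≤ occCount b x := by
  by_cases hfin : {n | a n = some x}.Finite
  · set N := hfin.toFinset.sup id + 1 with hNdef
    have hb : ∀ n, a n = some x → n < N := fun n hn =>
      Nat.lt_succ_of_le (Finset.le_sup (f := id) (hfin.mem_toFinset.2 hn))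
    rw [← pcount_eq_occ a x N hb]
    exact main_claim succ c0 a b haL hbC N x
  · have htop : occCount a x = ⊤ := Set.Infinite.encard_eq hfin
    rw [htop]
    have hbt : occCount b x = ⊤ := by
      by_contra hne
      set m := (occCount b x).toNat with hmdef
      have hm : (m : ℕ∞) = occCount b x := ENat.coe_toNat hne
      obtain ⟨N, hN⟩ := exists_prefix_ge a x (m + 1) (by rw [htop]; exact le_top)
      have h1 := main_claim succ c0 a b haL hbC N x
      rw [← hm] at h1
      have h2 : (m + 1 : ℕ∞) ≤ (pcount a N x : ℕ∞) := by exact_mod_cast hN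
      have h3 : (m + 1 : ℕ) ≤ m := by
        have h4 := le_trans h2 h1
        exact_mod_cast h4
      omega
    rw [hbt]

end Aux

/-- If `a` and `b` are both legal and complete toppling sequences for the same initial
configuration, every vertex occurs equally often in both. -/
theorem legal_complete_occ_eq {V : Type*} [DecidableEq V] (succ : V → Finset V)
    (c0 : V → ℤ) (a b : ℕ → Option V)
    (haL : LegalSeq succ c0 a) (haC : CompleteSeq succ c0 a)
    (hbL : LegalSeq succ c0 b) (hbC : CompleteSeq succ c0 b) (x : V) :
    occCount a x = occCount b x :=
  le_antisymm (occ_le succ c0 a b haL hbC x) (occ_le succ c0 b a hbL haC x)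
end

section
/- In a sandpile on a connected (undirected, locally finite) graph, if some vertex topples infinitely often in a legal complete toppling sequence, then every vertex topples infinitely often. -/
section Aux

variable {V : Type*} [DecidableEq V] (succ : V → Finset V) (c0 : V → ℤ) (a : ℕ → Option V)

lemma confAt_le_succ {n : ℕ} {y : V} (h : a n ≠ some y) :
    confAt succ c0 a n y ≤ confAt succ c0 a (n + 1) y := by
  cases hx : a n with
  | none => simp [confAt, hx]
  | some x =>
    have hxy : y ≠ x := by rintro rfl; exact h hx
    simp only [confAt, hx, toppleStep, if_neg hxy]
    split <;> omega

lemma confAt_le_of_no {y : V} {N m : ℕ} (h : N ≤ m)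
    (hno : ∀ j, N ≤ j → a j ≠ some y) :
    confAt succ c0 a N y ≤ confAt succ c0 a m y := by
  induction m, h using Nat.le_induction with
  | base => exact le_refl _
  | succ m hm ih =>
    exact le_trans ih (confAt_le_succ succ c0 a (hno m hm))

lemma confAt_succ_of_mem {n : ℕ} {x y : V} (h : a n = some x) (hy : y ∈ succ x)
    (hxy : y ≠ x) :
    confAt succ c0 a (n + 1) y = confAt succ c0 a n y + 1 := by
  simp only [confAt, h, toppleStep, if_neg hxy, if_pos hy]
  ring

end Aux

/-- On a connected locally finite graph, if some vertex topples infinitely often in a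
legal complete toppling sequence, then every vertex topples infinitely often. -/
theorem infinite_topple_spreads {V : Type*} [DecidableEq V] (G : SimpleGraph V)
    [∀ v : V, Fintype (G.neighborSet v)] (hG : G.Connected)
    (c0 : V → ℤ) (a : ℕ → Option V)
    (hleg : LegalSeq (fun v => G.neighborFinset v) c0 a)
    (hcom : CompleteSeq (fun v => G.neighborFinset v) c0 a)
    (v : V) (hv : occCount a v = ⊤) :
    ∀ w : V, occCount a w = ⊤ := by
  classical
  set s : V → Finset V := fun v => G.neighborFinset v with hs
  have step : ∀ u w : V, G.Adj u w → occCount a u = ⊤ → occCount a w = ⊤ := by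
    intro u w hadj hu
    by_contra hw
    have hSinf : {n | a n = some u}.Infinite := by
      rwa [occCount, Set.encard_eq_top_iff] at hu
    have hTfin : {n | a n = some w}.Finite :=
      Set.not_infinite.mp fun hi =>
        hw (by rw [occCount]; exact Set.encard_eq_top_iff.mpr hi)
    obtain ⟨B, hB⟩ := hTfin.bddAbove
    set N := B + 1 with hN
    have hno : ∀ j, N ≤ j → a j ≠ some w := by
      intro j hj hcon
      have := hB hcon
      omega
    have hwu : w ≠ u := fun h => G.irrefl (h ▸ hadj)
    have hmem : w ∈ s u := by
      simp only [hs, SimpleGraph.mem_neighborFinset]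
      exact hadj
    have claim : ∀ k : ℕ, ∃ n, N ≤ n ∧
        confAt s c0 a N w + k ≤ confAt s c0 a n w := by
      intro k
      induction k with
      | zero => exact ⟨N, le_refl _, by simp⟩
      | succ k ih =>
        obtain ⟨n, hn, hconf⟩ := ih
        obtain ⟨m, hm, hnm⟩ := hSinf.exists_gt n
        have h1 : confAt s c0 a n w ≤ confAt s c0 a m w :=
          confAt_le_of_no s c0 a (Nat.le_of_lt hnm)
            (fun j hj => hno j (le_trans hn hj))
        have h2 : confAt s c0 a (m + 1) w = confAt s c0 a m w + 1 :=
          confAt_succ_of_mem s c0 a hm hmem hwu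
        refine ⟨m + 1, by omega, ?_⟩
        push_cast
        omega
    obtain ⟨n, hn, hconf⟩ := claim (((s w).card - confAt s c0 a N w).toNat)
    have hk : ((s w).card : ℤ) - confAt s c0 a N w ≤
        (((s w).card - confAt s c0 a N w).toNat : ℤ) := Int.self_le_toNat _
    have huns : Unstable s (confAt s c0 a n) w := by
      unfold Unstable; omega
    obtain ⟨m, hnm, ham⟩ := hcom n w huns
    exact hno m (le_trans hn hnm) ham
  have aux : ∀ (x y : V), G.Walk x y → occCount a x = ⊤ → occCount a y = ⊤ := by
    intro x y p
    induction p with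
    | nil => exact id
    | cons h q ih => exact fun hx => ih (step _ _ h hx)
  intro w
  exact aux v w (hG v w).some hv
end

section
/- In a sandpile on the graph Z^3 (each vertex has degree 6), if every vertex topples at least once in a legal complete toppling sequence, then every vertex topples infinitely often. -/
/-- The six nearest neighbours of a vertex of `ℤ³`. -/
def Z3nbrs (v : ℤ × ℤ × ℤ) : Finset (ℤ × ℤ × ℤ) :=
  {(v.1 + 1, v.2.1, v.2.2), (v.1 - 1, v.2.1, v.2.2),
   (v.1, v.2.1 + 1, v.2.2), (v.1, v.2.1 - 1, v.2.2),
   (v.1, v.2.1, v.2.2 + 1), (v.1, v.2.1, v.2.2 - 1)}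

lemma Z3nbrs_self_notMem (v : ℤ × ℤ × ℤ) : v ∉ Z3nbrs v := by
  obtain ⟨x, y, z⟩ := v
  simp only [Z3nbrs, Finset.mem_insert, Finset.mem_singleton, Prod.mk.injEq]
  omega

set_option maxHeartbeats 2000000 in
lemma Z3nbrs_symm {v w : ℤ × ℤ × ℤ} : v ∈ Z3nbrs w ↔ w ∈ Z3nbrs v := by
  obtain ⟨x, y, z⟩ := v; obtain ⟨d, e, f⟩ := w
  simp only [Z3nbrs, Finset.mem_insert, Finset.mem_singleton, Prod.mk.injEq]
  omega

lemma Z3nbrs_card (v : ℤ × ℤ × ℤ) : (Z3nbrs v).card = 6 := by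
  obtain ⟨x, y, z⟩ := v
  simp only [Z3nbrs]
  rw [Finset.card_insert_of_notMem (by simp only [Finset.mem_insert, Finset.mem_singleton, Prod.mk.injEq]; omega),
      Finset.card_insert_of_notMem (by simp only [Finset.mem_insert, Finset.mem_singleton, Prod.mk.injEq]; omega),
      Finset.card_insert_of_notMem (by simp only [Finset.mem_insert, Finset.mem_singleton, Prod.mk.injEq]; omega),
      Finset.card_insert_of_notMem (by simp only [Finset.mem_insert, Finset.mem_singleton, Prod.mk.injEq]; omega),
      Finset.card_insert_of_notMem (by simp only [Finset.mem_singleton, Prod.mk.injEq]; omega),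
      Finset.card_singleton]


lemma conf_eq (c0 : ℤ × ℤ × ℤ → ℤ) (a : ℕ → Option (ℤ × ℤ × ℤ)) (v : ℤ × ℤ × ℤ) (N : ℕ)
    (hv : ∀ m, N ≤ m → a m ≠ some v) :
    ∀ n, N ≤ n →
      confAt Z3nbrs c0 a n v =
        confAt Z3nbrs c0 a N v +
          (((Finset.Ico N n).filter (fun m => ∃ y ∈ Z3nbrs v, a m = some y)).card : ℤ) := by
  intro n hn
  induction n with
  | zero =>
    have : N = 0 := Nat.le_zero.mp hn
    subst this; simp
  | succ n ih =>
    rcases Nat.lt_or_ge n N with h | h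
    · have : N = n + 1 := by omega
      subst this; simp
    · have hIH := ih h
      have hIco : Finset.Ico N (n + 1) = insert n (Finset.Ico N n) := by
        ext k; simp [Finset.mem_Ico]; omega
      have hnmem : n ∉ Finset.Ico N n := by simp
      cases ha : a n with
      | none =>
        have hc : confAt Z3nbrs c0 a (n+1) v = confAt Z3nbrs c0 a n v := by
          simp [confAt, ha]
        rw [hc, hIH, hIco, Finset.filter_insert]
        rw [if_neg (by simp [ha])]
      | some x =>
        have hxv : x ≠ v := fun h' => hv n h (h' ▸ ha)
        have hc : confAt Z3nbrs c0 a (n+1) v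
            = confAt Z3nbrs c0 a n v + (if v ∈ Z3nbrs x then 1 else 0) := by
          simp [confAt, ha, toppleStep, hxv.symm]
        have hP : (∃ y ∈ Z3nbrs v, a n = some y) ↔ v ∈ Z3nbrs x := by
          constructor
          · rintro ⟨y, hy, hay⟩
            rw [ha] at hay
            exact Z3nbrs_symm.mp ((Option.some.inj hay) ▸ hy)
          · intro h'
            exact ⟨x, Z3nbrs_symm.mpr h', ha⟩
        rw [hc, hIH, hIco, Finset.filter_insert]
        by_cases hmem : v ∈ Z3nbrs x
        · rw [if_pos (hP.mpr hmem), if_pos hmem,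
            Finset.card_insert_of_notMem (fun hmm => hnmem (Finset.mem_of_mem_filter _ hmm))]
          push_cast; ring
        · rw [if_neg (fun hp => hmem (hP.mp hp)), if_neg hmem]
          ring

lemma descent {c0 : ℤ × ℤ × ℤ → ℤ} {a : ℕ → Option (ℤ × ℤ × ℤ)}
    (hleg : LegalSeq Z3nbrs c0 a) (hcom : CompleteSeq Z3nbrs c0 a)
    (hall : ∀ v, ∃ n, a n = some v)
    {L : ℕ} {v : ℤ × ℤ × ℤ} (hL : a L = some v) (hlast : ∀ m, L < m → a m ≠ some v) :
    ∃ L' < L, ∃ y, a L' = some y ∧ ∀ m, L' < m → a m ≠ some y := by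
  have hnotopple : ∀ m, L + 1 ≤ m → a m ≠ some v := fun m hm => hlast m hm
  have hunst := hleg L v hL
  rw [Unstable, Z3nbrs_card] at hunst
  have hstep : confAt Z3nbrs c0 a (L + 1) v = confAt Z3nbrs c0 a L v - 6 := by
    simp [confAt, hL, toppleStep, Z3nbrs_card, Z3nbrs_self_notMem]
  have h0 : 0 ≤ confAt Z3nbrs c0 a (L + 1) v := by
    rw [hstep]; push_cast at hunst; omega
  have hbound : ∀ n, L + 1 ≤ n → confAt Z3nbrs c0 a n v < 6 := by
    intro n hn
    by_contra hge
    push_neg at hge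
    have hu : Unstable Z3nbrs (confAt Z3nbrs c0 a n) v := by
      rw [Unstable, Z3nbrs_card]; push_cast; omega
    obtain ⟨m, hm1, hm2⟩ := hcom n v hu
    exact hlast m (by omega) hm2
  -- find a neighbour that never topples after time L
  have hy : ∃ y ∈ Z3nbrs v, ∀ m, L + 1 ≤ m → a m ≠ some y := by
    by_contra hcon
    push_neg at hcon
    have hsel : ∀ y : ℤ × ℤ × ℤ, ∃ m, y ∈ Z3nbrs v → (L + 1 ≤ m ∧ a m = some y) := by
      intro y
      by_cases hy : y ∈ Z3nbrs v
      · obtain ⟨m, hm1, hm2⟩ := hcon y hy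
        exact ⟨m, fun _ => ⟨hm1, hm2⟩⟩
      · exact ⟨0, fun h => absurd h hy⟩
    choose g hg using hsel
    set n0 := (Z3nbrs v).sup g + 1 with hn0
    have hsub : (Z3nbrs v).image g ⊆
        (Finset.Ico (L + 1) n0).filter (fun m => ∃ y ∈ Z3nbrs v, a m = some y) := by
      intro m hm
      simp only [Finset.mem_image] at hm
      obtain ⟨y, hy, rfl⟩ := hm
      obtain ⟨h1, h2⟩ := hg y hy
      refine Finset.mem_filter.mpr ⟨Finset.mem_Ico.mpr ⟨h1, ?_⟩, ⟨y, hy, h2⟩⟩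
      have := Finset.le_sup (f := g) hy
      omega
    have hinj : Set.InjOn g (Z3nbrs v) := by
      intro y1 h1 y2 h2 he
      have e1 := (hg y1 h1).2
      have e2 := (hg y2 h2).2
      rw [he, e2] at e1
      exact (Option.some.inj e1).symm
    have hcard : 6 ≤ ((Finset.Ico (L + 1) n0).filter
        (fun m => ∃ y ∈ Z3nbrs v, a m = some y)).card := by
      calc 6 = (Z3nbrs v).card := (Z3nbrs_card v).symm
        _ = ((Z3nbrs v).image g).card := (Finset.card_image_of_injOn hinj).symm
        _ ≤ _ := Finset.card_le_card hsub
    have hLn0 : L + 1 ≤ n0 := by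
      have hmem : (v.1 + 1, v.2.1, v.2.2) ∈ Z3nbrs v := by
        simp [Z3nbrs]
      have h1 := (hg _ hmem).1
      have h2 := Finset.le_sup (f := g) hmem
      omega
    have heq := conf_eq c0 a v (L + 1) hnotopple n0 hLn0
    have hb := hbound n0 hLn0
    omega
  obtain ⟨y, hynb, hy⟩ := hy
  have hyne : y ≠ v := fun h => Z3nbrs_self_notMem v (h ▸ hynb)
  have hyL : ∀ m, L ≤ m → a m ≠ some y := by
    intro m hm
    rcases eq_or_lt_of_le hm with rfl | h
    · rw [hL]
      exact fun hh => hyne (Option.some.inj hh).symm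
    · exact hy m h
  obtain ⟨n, hn⟩ := hall y
  have hnL : n < L := lt_of_not_ge fun h => hyL n h hn
  set L' := Nat.findGreatest (fun k => a k = some y) L with hL'
  have hPL' : a L' = some y := by
    rw [hL']
    exact Nat.findGreatest_spec (P := fun k => a k = some y) (le_of_lt hnL) hn
  have hL'le : L' ≤ L := Nat.findGreatest_le L
  have hL'lt : L' < L := lt_of_le_of_ne hL'le (fun h => hyL L le_rfl (h ▸ hPL'))
  refine ⟨L', hL'lt, y, hPL', ?_⟩
  intro m hm hma
  rcases le_or_gt m L with h | h
  · exact Nat.findGreatest_is_greatest (P := fun k => a k = some y) hm h hma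
  · exact hyL m (le_of_lt h) hma

/-- In a sandpile on `ℤ³`, if every vertex topples at least once in a legal complete
toppling sequence, then every vertex topples infinitely often. -/
theorem all_once_then_forever {c0 : ℤ × ℤ × ℤ → ℤ} (a : ℕ → Option (ℤ × ℤ × ℤ))
    (hleg : LegalSeq Z3nbrs c0 a) (hcom : CompleteSeq Z3nbrs c0 a)
    (hall : ∀ v, ∃ n, a n = some v) :
    ∀ v, occCount a v = ⊤ := by
  -- every toppling is followed by a later toppling of the same vertex
  have key : ∀ L v, a L = some v → ∃ m, L < m ∧ a m = some v := by
    intro L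
    induction L using Nat.strong_induction_on with
    | _ L ih =>
      intro v hv
      by_contra hno
      push_neg at hno
      obtain ⟨L', hL'lt, y, hy1, hy2⟩ :=
        descent hleg hcom hall hv (fun m hm hma => hno m hm hma)
      obtain ⟨m, hm1, hm2⟩ := ih L' hL'lt y hy1
      exact hy2 m hm1 hm2
  intro v
  by_contra hfin
  have hfin' : {n | a n = some v}.Finite := by
    rw [← Set.encard_ne_top_iff]
    exact hfin
  obtain ⟨b, hb⟩ := hfin'.bddAbove
  have hgrow : ∀ N : ℕ, ∃ m, N ≤ m ∧ a m = some v := by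
    intro N
    induction N with
    | zero =>
      obtain ⟨n, hn⟩ := hall v
      exact ⟨n, Nat.zero_le n, hn⟩
    | succ N ihN =>
      obtain ⟨m, hm1, hm2⟩ := ihN
      obtain ⟨m', hm'1, hm'2⟩ := key m v hm2
      exact ⟨m', by omega, hm'2⟩
  obtain ⟨m, hm1, hm2⟩ := hgrow (b + 1)
  have := hb (Set.mem_setOf.mpr hm2)
  omega
end

section
/- In a sandpile on a connected locally finite graph, exactly one of the following holds for any legal complete toppling sequence: every vertex topples finitely often, or every vertex topples infinitely often. -/
lemma conf_mono {V : Type*} [DecidableEq V] (succ : V → Finset V) (c0 : V → ℤ)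
    (a : ℕ → Option V) (n : ℕ) (y : V) (h : a n ≠ some y) :
    confAt succ c0 a n y ≤ confAt succ c0 a (n+1) y := by
  cases h' : a n with
  | none => simp [confAt, h']
  | some x =>
    have hxy : y ≠ x := by rintro rfl; exact h h'
    simp [confAt, h', toppleStep, hxy]
    split_ifs <;> omega

lemma conf_step_eq {V : Type*} [DecidableEq V] (succ : V → Finset V) (c0 : V → ℤ)
    (a : ℕ → Option V) (n : ℕ) (x y : V) (h : a n = some x) (hy : y ∈ succ x)
    (hxy : y ≠ x) :
    confAt succ c0 a (n+1) y = confAt succ c0 a n y + 1 := by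
  simp [confAt, h, toppleStep, hxy, hy]

lemma conf_mono_chain {V : Type*} [DecidableEq V] (succ : V → Finset V) (c0 : V → ℤ)
    (a : ℕ → Option V) (y : V) (N : ℕ) (hN : ∀ m, N ≤ m → a m ≠ some y) :
    ∀ m n, N ≤ n → n ≤ m → confAt succ c0 a n y ≤ confAt succ c0 a m y := by
  intro m
  induction m with
  | zero => intro n _ h; interval_cases n; rfl
  | succ m ih =>
    intro n hNn hnm
    rcases Nat.lt_or_ge n (m+1) with h | h
    · have h1 : n ≤ m := Nat.lt_succ_iff.mp h
      have h2 : N ≤ m := le_trans hNn h1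
      exact le_trans (ih n hNn h1) (conf_mono succ c0 a m y (hN m h2))
    · have : n = m + 1 := le_antisymm hnm h
      subst this; rfl

lemma infinite_of_adj {V : Type*} [DecidableEq V] (succ : V → Finset V) (c0 : V → ℤ)
    (a : ℕ → Option V)
    (hcom : CompleteSeq succ c0 a)
    (x y : V) (hy : y ∈ succ x) (hxy : y ≠ x)
    (hx : occCount a x = ⊤) : occCount a y = ⊤ := by
  by_contra hfin
  have hfinset : {n | a n = some y}.Finite := Set.not_infinite.mp (fun h => hfin h.encard_eq)
  obtain ⟨N, hNb⟩ := hfinset.bddAbove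
  have hN : ∀ m, N + 1 ≤ m → a m ≠ some y := by
    intro m hm hmem
    have := hNb hmem
    omega
  have hxinf : {n | a n = some x}.Infinite := by
    have := hx; unfold occCount at this; exact Set.encard_eq_top_iff.mp this
  -- growth claim
  have grow : ∀ k : ℕ, ∃ n, N + 1 ≤ n ∧ confAt succ c0 a (N+1) y + k ≤ confAt succ c0 a n y := by
    intro k
    induction k with
    | zero => exact ⟨N+1, le_refl _, by simp⟩
    | succ k ih =>
      obtain ⟨n, hn, hk⟩ := ih
      obtain ⟨m, hmx, hm⟩ := hxinf.exists_gt n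
      have h1 : confAt succ c0 a n y ≤ confAt succ c0 a m y :=
        conf_mono_chain succ c0 a y (N+1) hN m n hn (le_of_lt hm)
      have h2 : confAt succ c0 a (m+1) y = confAt succ c0 a m y + 1 :=
        conf_step_eq succ c0 a m x y hmx hy hxy
      exact ⟨m+1, by omega, by push_cast; omega⟩
  obtain ⟨n, hn, hk⟩ := grow ((((succ y).card : ℤ) - confAt succ c0 a (N+1) y).toNat)
  have hun : ((succ y).card : ℤ) ≤ confAt succ c0 a n y := by
    have := Int.self_le_toNat (((succ y).card : ℤ) - confAt succ c0 a (N+1) y)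
    omega
  obtain ⟨m, hm, hmy⟩ := hcom n y hun
  exact hN m (le_trans hn hm) hmy

lemma all_top_of_exists {V : Type*} [DecidableEq V] (G : SimpleGraph V)
    [∀ v : V, Fintype (G.neighborSet v)] (hG : G.Connected)
    (c0 : V → ℤ) (a : ℕ → Option V)
    (hcom : CompleteSeq (fun v => G.neighborFinset v) c0 a)
    (v0 : V) (h0 : occCount a v0 = ⊤) : ∀ v, occCount a v = ⊤ := by
  intro v
  obtain ⟨w⟩ := hG v0 v
  induction w with
  | nil => exact h0
  | @cons u b c hadj p ih =>
    refine ih ?_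
    exact infinite_of_adj (fun v => G.neighborFinset v) c0 a hcom u b
      ((G.mem_neighborFinset u b).mpr hadj) hadj.ne' h0

/-- On a connected locally finite graph, for any legal complete toppling sequence exactly
one of the following holds: every vertex topples finitely often, or every vertex topples
infinitely often. -/
theorem finite_or_infinite_dichotomy {V : Type*} [DecidableEq V] (G : SimpleGraph V)
    [∀ v : V, Fintype (G.neighborSet v)] (hG : G.Connected)
    (c0 : V → ℤ) (a : ℕ → Option V)
    (hleg : LegalSeq (fun v => G.neighborFinset v) c0 a)
    (hcom : CompleteSeq (fun v => G.neighborFinset v) c0 a) :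
    Xor' (∀ v : V, occCount a v ≠ ⊤) (∀ v : V, occCount a v = ⊤) := by
  obtain ⟨v0⟩ := hG.nonempty
  by_cases h : ∀ v : V, occCount a v ≠ ⊤
  · exact Or.inl ⟨h, fun hall => h v0 (hall v0)⟩
  · push_neg at h
    obtain ⟨v, hv⟩ := h
    have hall := all_top_of_exists G hG c0 a hcom v hv
    exact Or.inr ⟨hall, fun hfin => hfin v0 (hall v0)⟩
end

section
/- A sandpile on a finite graph with a fixed initial configuration either reaches a stable configuration after finitely many topplings in any legal complete toppling sequence, or every legal complete toppling sequence is infinite; moreover, if the initial configuration is stable (no vertex has at least d(x) chips), then the empty sequence is legal and complete, and no vertex ever topples. -/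
section Aux

variable {V : Type*} [DecidableEq V] (succ : V → Finset V)

/-- Configuration after toppling a list of vertices in order. -/
def confList : (V → ℤ) → List V → (V → ℤ)
  | c, [] => c
  | c, x :: l => confList (toppleStep succ c x) l

/-- A list of topplings is legal from `c`. -/
def LegalList : (V → ℤ) → List V → Prop
  | _, [] => True
  | c, x :: l => Unstable succ c x ∧ LegalList (toppleStep succ c x) l

lemma toppleStep_mono (c : V → ℤ) (x v : V) (h : v ≠ x) :
    c v ≤ toppleStep succ c x v := by
  simp only [toppleStep, if_neg h]
  split <;> omega

lemma toppleStep_comm (c : V → ℤ) (x y : V) :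
    toppleStep succ (toppleStep succ c x) y = toppleStep succ (toppleStep succ c y) x := by
  funext v; simp only [toppleStep]; ring

lemma confList_append (c : V → ℤ) (l1 l2 : List V) :
    confList succ c (l1 ++ l2) = confList succ (confList succ c l1) l2 := by
  induction l1 generalizing c with
  | nil => rfl
  | cons x l ih => simp [confList, ih]

lemma confList_mono (c : V → ℤ) (l : List V) (v : V) (h : v ∉ l) :
    c v ≤ confList succ c l v := by
  induction l generalizing c with
  | nil => exact le_refl _
  | cons x l ih =>
    simp only [List.mem_cons, not_or] at h
    exact le_trans (toppleStep_mono succ c x v h.1) (ih _ h.2)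

lemma legalList_append (c : V → ℤ) (l1 l2 : List V) :
    LegalList succ c (l1 ++ l2) ↔
      LegalList succ c l1 ∧ LegalList succ (confList succ c l1) l2 := by
  induction l1 generalizing c with
  | nil => simp [LegalList, confList]
  | cons x l ih => simp [LegalList, confList, ih, and_assoc]

lemma unstable_topple_ne (c : V → ℤ) (x y : V) (h : x ≠ y)
    (hx : Unstable succ c x) : Unstable succ (toppleStep succ c y) x :=
  le_trans hx (toppleStep_mono succ c y x h)

lemma confList_perm (c : V → ℤ) {l1 l2 : List V} (h : l1.Perm l2) :
    confList succ c l1 = confList succ c l2 := by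
  induction h generalizing c with
  | nil => rfl
  | cons a _ ih => simp [confList, ih]
  | swap x y l => simp [confList, toppleStep_comm]
  | trans _ _ ih1 ih2 => exact (ih1 c).trans (ih2 c)

lemma legal_shift (x : V) (m2 : List V) :
    ∀ (m1 : List V) (c : V → ℤ), x ∉ m1 → Unstable succ c x →
      LegalList succ c (m1 ++ x :: m2) → LegalList succ (toppleStep succ c x) (m1 ++ m2)
  | [], c, _, _, hL => hL.2
  | y :: m1, c, hx, hux, hL => by
    simp only [List.mem_cons, not_or] at hx
    refine ⟨unstable_topple_ne succ c y x (Ne.symm hx.1) hL.1, ?_⟩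
    rw [toppleStep_comm]
    exact legal_shift x m2 m1 (toppleStep succ c y) hx.2
      (unstable_topple_ne succ c x y hx.1 hux) hL.2

lemma mem_split_first {x : V} : ∀ {m : List V}, x ∈ m →
    ∃ m1 m2, m = m1 ++ x :: m2 ∧ x ∉ m1 := by
  intro m hm
  induction m with
  | nil => simp at hm
  | cons y m ih =>
    by_cases hxy : x = y
    · exact ⟨[], m, by simp [hxy], by simp⟩
    · obtain ⟨m1, m2, rfl, hx1⟩ := ih (by simpa [hxy] using hm)
      exact ⟨y :: m1, m2, rfl, by simp [hxy, hx1]⟩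

/-- Least action principle: any legal list is no longer than a legal stabilizing list. -/
lemma least_action : ∀ (l : List V) (c : V → ℤ) (m : List V),
    LegalList succ c m → (∀ x, ¬ Unstable succ (confList succ c m) x) →
    LegalList succ c l → l.length ≤ m.length := by
  intro l
  induction l with
  | nil => simp
  | cons x l ih =>
    intro c m hmL hmS hlL
    have hux : Unstable succ c x := hlL.1
    have hxm : x ∈ m := by
      by_contra hxm
      exact hmS x (le_trans hux (confList_mono succ c m x hxm))
    obtain ⟨m1, m2, rfl, hx1⟩ := mem_split_first hxm
    have hperm : (x :: (m1 ++ m2)).Perm (m1 ++ x :: m2) := List.perm_middle.symm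
    have hL' : LegalList succ (toppleStep succ c x) (m1 ++ m2) :=
      legal_shift succ x m2 m1 c hx1 hux hmL
    have hS' : ∀ y, ¬ Unstable succ (confList succ (toppleStep succ c x) (m1 ++ m2)) y := by
      have : confList succ (toppleStep succ c x) (m1 ++ m2)
          = confList succ c (m1 ++ x :: m2) := by
        rw [← confList_perm succ c hperm]; rfl
      rw [this]; exact hmS
    have := ih (toppleStep succ c x) (m1 ++ m2) hL' hS' hlL.2
    simp only [List.length_cons, List.length_append] at *
    omega

/-- The list of vertices toppled during the first `n` steps of `a`. -/
def prefixList (a : ℕ → Option V) (n : ℕ) : List V := (List.range n).filterMap a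

lemma prefixList_succ (a : ℕ → Option V) (n : ℕ) :
    prefixList a (n + 1) = prefixList a n ++ (a n).toList := by
  simp only [prefixList, List.range_succ, List.filterMap_append]
  cases h : a n <;> simp [h]

variable (c0 : V → ℤ)

lemma confAt_eq_confList (a : ℕ → Option V) (n : ℕ) :
    confAt succ c0 a n = confList succ c0 (prefixList a n) := by
  induction n with
  | zero => rfl
  | succ n ih =>
    rw [prefixList_succ, confList_append]
    cases h : a n with
    | none => simp [confAt, h, ih, confList]
    | some x => simp [confAt, h, ih, confList]

lemma prefixList_legal {a : ℕ → Option V} (ha : LegalSeq succ c0 a) (n : ℕ) :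
    LegalList succ c0 (prefixList a n) := by
  induction n with
  | zero => trivial
  | succ n ih =>
    rw [prefixList_succ, legalList_append]
    refine ⟨ih, ?_⟩
    cases h : a n with
    | none => trivial
    | some x =>
      refine ⟨?_, trivial⟩
      rw [← confAt_eq_confList]
      exact ha n x h

lemma card_filter_eq_length (a : ℕ → Option V) (n : ℕ) :
    ((Finset.range n).filter (fun m => (a m).isSome)).card = (prefixList a n).length := by
  induction n with
  | zero => simp [prefixList]
  | succ n ih =>
    rw [Finset.range_add_one, Finset.filter_insert, prefixList_succ, List.length_append]
    cases h : a n with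
    | none => simp [h, ih]
    | some x =>
      rw [if_pos (by simp [h]), Finset.card_insert_of_notMem (by simp)]
      simp [h, ih]

lemma support_finite (a : ℕ → Option V) (K : ℕ)
    (hb : ∀ n, (prefixList a n).length ≤ K) : {n | (a n).isSome}.Finite := by
  by_contra h
  have hinf : {n | (a n).isSome}.Infinite := h
  obtain ⟨T, hT, hcard⟩ := hinf.exists_subset_card_eq (K + 1)
  have hsub : T ⊆ (Finset.range (T.sup id + 1)).filter (fun m => (a m).isSome) := by
    intro m hm
    simp only [Finset.mem_filter, Finset.mem_range]
    exact ⟨Nat.lt_succ_of_le (Finset.le_sup (f := id) hm), hT hm⟩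
  have := Finset.card_le_card hsub
  rw [hcard, card_filter_eq_length] at this
  exact absurd (le_trans this (hb _)) (by omega)

lemma eventually_none {a : ℕ → Option V} (h : {n | (a n).isSome}.Finite) :
    ∃ N, ∀ m, N ≤ m → a m = none := by
  obtain ⟨N, hN⟩ := h.bddAbove
  refine ⟨N + 1, fun m hm => ?_⟩
  cases hma : a m with
  | none => rfl
  | some x =>
    have : m ≤ N := hN (by simp [Set.mem_setOf_eq, hma])
    omega

lemma confAt_const (a : ℕ → Option V) : ∀ n, (∀ m, m < n → a m = none) →
    confAt succ c0 a n = c0 := by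
  intro n
  induction n with
  | zero => intro _; rfl
  | succ n ih =>
    intro h
    show (match a n with
      | none => confAt succ c0 a n
      | some x => toppleStep succ (confAt succ c0 a n) x) = c0
    rw [h n (Nat.lt_succ_self n)]
    exact ih (fun m hm => h m (Nat.lt_succ_of_lt hm))

end Aux

/-- On a finite graph, either every legal complete toppling sequence performs finitely
many topplings and reaches a stable configuration, or every legal complete toppling
sequence performs infinitely many topplings; moreover if the initial configuration is
stable then the empty sequence is legal and complete and no legal sequence ever topples
a vertex. -/
theorem finite_graph_halting {V : Type*} [Fintype V] [DecidableEq V] (G : SimpleGraph V)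
    [DecidableRel G.Adj] (c0 : V → ℤ) :
    ((∀ a : ℕ → Option V,
        LegalSeq (fun v => G.neighborFinset v) c0 a →
        CompleteSeq (fun v => G.neighborFinset v) c0 a →
        {n | (a n).isSome}.Finite ∧
          ∃ n, ∀ x, ¬ Unstable (fun v => G.neighborFinset v)
            (confAt (fun v => G.neighborFinset v) c0 a n) x) ∨
      (∀ a : ℕ → Option V,
        LegalSeq (fun v => G.neighborFinset v) c0 a →
        CompleteSeq (fun v => G.neighborFinset v) c0 a →
        {n | (a n).isSome}.Infinite)) ∧
    ((∀ x, ¬ Unstable (fun v => G.neighborFinset v) c0 x) →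
      (LegalSeq (fun v => G.neighborFinset v) c0 (fun _ => none) ∧
       CompleteSeq (fun v => G.neighborFinset v) c0 (fun _ => none) ∧
       ∀ a : ℕ → Option V, LegalSeq (fun v => G.neighborFinset v) c0 a →
         ∀ n x, a n ≠ some x)) := by
  set s : V → Finset V := fun v => G.neighborFinset v with hs
  constructor
  · by_cases h : ∃ a : ℕ → Option V, LegalSeq s c0 a ∧ CompleteSeq s c0 a ∧
        {n | (a n).isSome}.Finite
    · left
      intro b hbL hbC
      obtain ⟨a, haL, haC, haF⟩ := h
      obtain ⟨N, hN⟩ := eventually_none haF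
      have hstab : ∀ x, ¬ Unstable s (confAt s c0 a N) x := by
        intro x hx
        obtain ⟨m, hm, he⟩ := haC N x hx
        rw [hN m hm] at he
        exact absurd he (by simp)
      have hLleg : LegalList s c0 (prefixList a N) := prefixList_legal s c0 haL N
      have hLstab : ∀ x, ¬ Unstable s (confList s c0 (prefixList a N)) x := by
        rw [← confAt_eq_confList]; exact hstab
      have hlen : ∀ n, (prefixList b n).length ≤ (prefixList a N).length := fun n =>
        least_action s (prefixList b n) c0 (prefixList a N) hLleg hLstab
          (prefixList_legal s c0 hbL n)
      have hFin : {n | (b n).isSome}.Finite := support_finite b _ hlen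
      refine ⟨hFin, ?_⟩
      obtain ⟨M, hM⟩ := eventually_none hFin
      refine ⟨M, fun x hx => ?_⟩
      obtain ⟨m, hm, he⟩ := hbC M x hx
      rw [hM m hm] at he
      exact absurd he (by simp)
    · right
      intro b hbL hbC
      intro hfin
      exact h ⟨b, hbL, hbC, hfin⟩
  · intro hstab
    have hnone : ∀ n, confAt s c0 (fun _ => none) n = c0 := fun n =>
      confAt_const s c0 _ n (fun _ _ => rfl)
    refine ⟨?_, ?_, ?_⟩
    · intro n x hx
      exact absurd hx (by simp)
    · intro n x hx
      rw [hnone n] at hx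
      exact absurd hx (hstab x)
    · intro a haL n
      induction n using Nat.strong_induction_on with
      | _ n ih =>
        intro x hx
        have h0 : ∀ m, m < n → a m = none := by
          intro m hm
          cases hma : a m with
          | none => rfl
          | some y => exact absurd hma (ih m hm y)
        have := haL n x hx
        rw [confAt_const s c0 a n h0] at this
        exact hstab x this
end

section
/- Consider the sandpile on Z in which toppling at a vertex with at least 2 chips removes 2 chips and sends one to each of its two neighbours. If every vertex starts with exactly 1 chip except one vertex which starts with at least 2 chips, then every vertex of Z topples at least once in any legal complete toppling sequence. -/
/-- The two neighbours of a vertex of `ℤ`. -/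
def Znbrs (v : ℤ) : Finset ℤ := {v - 1, v + 1}

-- aux
def tc (a : ℕ → Option ℤ) (n : ℕ) (x : ℤ) : ℤ :=
  (((Finset.range n).filter (fun m => a m = some x)).card : ℤ)

lemma tc_nonneg (a n x) : 0 ≤ tc a n x := Int.natCast_nonneg _

lemma tc_succ (a n x) : tc a (n+1) x = tc a n x + (if a n = some x then 1 else 0) := by
  unfold tc
  rw [Finset.range_add_one, Finset.filter_insert]
  split_ifs with h
  · rw [Finset.card_insert_of_notMem (by simp)]; push_cast; ring
  · simp

lemma tc_zero_of_none (a x) (h : ∀ m, a m ≠ some x) (n : ℕ) : tc a n x = 0 := by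
  unfold tc
  rw [Finset.filter_false_of_mem (fun m _ => h m)]
  simp

lemma tc_pos (a : ℕ → Option ℤ) {n m : ℕ} {x : ℤ} (hm : m < n) (h : a m = some x) :
    1 ≤ tc a n x := by
  unfold tc
  have : m ∈ (Finset.range n).filter (fun m => a m = some x) := by
    simp [Finset.mem_filter, Finset.mem_range, hm, h]
  have := Finset.card_pos.mpr ⟨m, this⟩
  omega

lemma Znbrs_card (y : ℤ) : ((Znbrs y).card : ℤ) = 2 := by
  unfold Znbrs
  rw [Finset.card_insert_of_notMem (by simp; omega)]
  simp

lemma mem_Znbrs {v y : ℤ} : v ∈ Znbrs y ↔ v = y - 1 ∨ v = y + 1 := by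
  simp [Znbrs]

lemma conf_eq_s10 (c0 : ℤ → ℤ) (a : ℕ → Option ℤ) :
    ∀ n v, confAt Znbrs c0 a n v
      = c0 v - 2 * tc a n v + tc a n (v-1) + tc a n (v+1) := by
  intro n
  induction n with
  | zero => intro v; simp [confAt, tc]
  | succ n ih =>
    intro v
    rw [tc_succ, tc_succ, tc_succ]
    cases h : a n with
    | none => simp only [confAt, h]; simp [ih v, h]
    | some y =>
      simp only [confAt, h]
      unfold toppleStep
      rw [ih v, Znbrs_card]
      have hmem : (if v ∈ Znbrs y then (1:ℤ) else 0)
          = (if v = y - 1 then 1 else 0) + (if v = y + 1 then 1 else 0) := by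
        by_cases h1 : v = y - 1 <;> by_cases h2 : v = y + 1 <;>
          simp [mem_Znbrs, h1, h2] <;> omega
      rw [hmem]
      have e1 : (some y = some v) ↔ y = v := by simp
      have e2 : (some y = some (v-1)) ↔ v = y + 1 := by constructor <;> intro h <;> simp_all <;> omega
      have e3 : (some y = some (v+1)) ↔ v = y - 1 := by constructor <;> intro h <;> simp_all <;> omega
      simp only [e1, e2, e3]
      split_ifs <;> omega

lemma unstable_iff (c : ℤ → ℤ) (x : ℤ) : Unstable Znbrs c x ↔ 2 ≤ c x := by
  unfold Unstable; rw [Znbrs_card]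

lemma step_nbr (c0 : ℤ → ℤ) (h1 : ∀ v, 1 ≤ c0 v) (a : ℕ → Option ℤ)
    (hcom : CompleteSeq Znbrs c0 a) {v u : ℤ} {n : ℕ} (hn : a n = some v)
    (hu : u = v + 1 ∨ u = v - 1) : ∃ m, a m = some u := by
  by_contra h
  push_neg at h
  have htz : ∀ k, tc a k u = 0 := tc_zero_of_none a u h
  have hc : 2 ≤ confAt Znbrs c0 a (n+1) u := by
    rw [conf_eq_s10]
    have h0 := h1 u
    rcases hu with rfl | rfl
    · have : 1 ≤ tc a (n+1) (v+1-1) := by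
        have : v + 1 - 1 = v := by ring
        rw [this]; exact tc_pos a (Nat.lt_succ_self n) hn
      have := tc_nonneg a (n+1) (v+1+1)
      have := htz (n+1)
      omega
    · have : 1 ≤ tc a (n+1) (v-1+1) := by
        have : v - 1 + 1 = v := by ring
        rw [this]; exact tc_pos a (Nat.lt_succ_self n) hn
      have := tc_nonneg a (n+1) (v-1-1)
      have := htz (n+1)
      omega
  obtain ⟨m, _, hm⟩ := hcom (n+1) u ((unstable_iff _ _).mpr hc)
  exact h m hm

/-- On `ℤ`, if every vertex starts with exactly one chip except one vertex which starts
with at least two chips, then every vertex topples at least once in any legal complete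
toppling sequence. -/
theorem Z_all_topple (c0 : ℤ → ℤ) (w : ℤ) (hw : 2 ≤ c0 w)
    (hother : ∀ v : ℤ, v ≠ w → c0 v = 1)
    (a : ℕ → Option ℤ) (hleg : LegalSeq Znbrs c0 a) (hcom : CompleteSeq Znbrs c0 a) :
    ∀ v : ℤ, ∃ n, a n = some v := by
  have h1 : ∀ v, 1 ≤ c0 v := by
    intro v
    by_cases hv : v = w
    · subst hv; omega
    · rw [hother v hv]
  have hbase : ∃ n, a n = some w := by
    obtain ⟨m, _, hm⟩ := hcom 0 w ((unstable_iff _ _).mpr (by simpa [confAt] using hw))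
    exact ⟨m, hm⟩
  have key : ∀ k : ℕ, (∃ n, a n = some (w + k)) ∧ (∃ n, a n = some (w - k)) := by
    intro k
    induction k with
    | zero => exact ⟨by simpa using hbase, by simpa using hbase⟩
    | succ k ih =>
      obtain ⟨⟨n1, hn1⟩, ⟨n2, hn2⟩⟩ := ih
      constructor
      · have := step_nbr c0 h1 a hcom hn1 (Or.inl rfl)
        have e : w + (k:ℤ) + 1 = w + ((k:ℕ)+1 : ℕ) := by push_cast; ring
        rwa [e] at this
      · have := step_nbr c0 h1 a hcom hn2 (Or.inr rfl)
        have e : w - (k:ℤ) - 1 = w - ((k:ℕ)+1 : ℕ) := by push_cast; ring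
        rwa [e] at this
  intro v
  rcases le_total w v with hle | hle
  · obtain ⟨k, hk⟩ := Int.le.dest hle
    have := (key k).1
    rwa [hk] at this
  · obtain ⟨k, hk⟩ := Int.le.dest hle
    have := (key k).2
    have e : w - (k:ℤ) = v := by omega
    rwa [e] at this
end

section
/- Let a sandpile on a finite graph have a legal complete toppling sequence in which every vertex topples at least once and only finitely often. Then deleting the first occurrence of each vertex from the sequence yields a toppling sequence that results in the same final chip configuration and is still complete, contradicting the maximality of legal sequences; hence on a finite graph no legal complete toppling sequence can topple every vertex at least once but only finitely often unless it is infinite. -/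
/-- Number of occurrences of `x` among the first `n` entries of `a`. -/
def cntAux {V : Type*} [DecidableEq V] (a : ℕ → Option V) (n : ℕ) (x : V) : ℕ :=
  ((Finset.range n).filter (fun m => a m = some x)).card

lemma cntAux_succ {V : Type*} [DecidableEq V] (a : ℕ → Option V) (n : ℕ) (x : V) :
    cntAux a (n + 1) x = cntAux a n x + (if a n = some x then 1 else 0) := by
  unfold cntAux
  rw [Finset.range_add_one, Finset.filter_insert]
  split
  · rw [Finset.card_insert_of_notMem (by simp)]
  · simp

lemma cntAux_mono {V : Type*} [DecidableEq V] (a : ℕ → Option V) {m n : ℕ} (h : m ≤ n)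
    (x : V) : cntAux a m x ≤ cntAux a n x :=
  Finset.card_le_card (Finset.filter_subset_filter _ (by simpa using Finset.range_subset_range.2 h))

/-- Explicit formula for the configuration after `n` steps. -/
lemma confAt_eq_s12 {V : Type*} [Fintype V] [DecidableEq V] (succ : V → Finset V)
    (c0 : V → ℤ) (a : ℕ → Option V) (n : ℕ) (v : V) :
    confAt succ c0 a n v =
      c0 v + (∑ x, (cntAux a n x : ℤ) * (if v ∈ succ x then 1 else 0))
        - (cntAux a n v : ℤ) * ((succ v).card : ℤ) := by
  induction n with
  | zero => simp [confAt, cntAux]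
  | succ n ih =>
    rw [confAt]
    cases h : a n with
    | none =>
      have hc : ∀ x, cntAux a (n + 1) x = cntAux a n x := by
        intro x; rw [cntAux_succ, h]; simp
      simp only [hc, ih]
    | some y =>
      have hc : ∀ x, (cntAux a (n + 1) x : ℤ) =
          (cntAux a n x : ℤ) + (if y = x then 1 else 0) := by
        intro x
        rw [cntAux_succ, h]
        by_cases hx : y = x <;> simp [hx]
      have hsum2 : (∑ x, (cntAux a (n + 1) x : ℤ) * (if v ∈ succ x then 1 else 0)) =
          (∑ x, (cntAux a n x : ℤ) * (if v ∈ succ x then 1 else 0)) +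
            (if v ∈ succ y then (1:ℤ) else 0) := by
        have step : ∀ x ∈ Finset.univ, (cntAux a (n + 1) x : ℤ) *
            (if v ∈ succ x then 1 else 0) =
            (cntAux a n x : ℤ) * (if v ∈ succ x then 1 else 0) +
              (if y = x then (if v ∈ succ x then (1:ℤ) else 0) else 0) := by
          intro x _
          rw [hc x]
          split_ifs <;> ring
        rw [Finset.sum_congr rfl step, Finset.sum_add_distrib,
          Finset.sum_ite_eq Finset.univ y (fun x => if v ∈ succ x then (1:ℤ) else 0),
          if_pos (Finset.mem_univ y)]
      have hcv : (cntAux a (n + 1) v : ℤ) = (cntAux a n v : ℤ) + (if v = y then 1 else 0) := by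
        rw [hc v]
        by_cases hv : v = y <;> simp [hv, eq_comm]
      show confAt succ c0 a n v - (if v = y then ((succ y).card : ℤ) else 0) +
          (if v ∈ succ y then 1 else 0) = _
      rw [ih, hsum2, hcv]
      by_cases hv : v = y
      · subst hv; split_ifs <;> ring
      · simp only [if_neg hv]; ring

/-- For any `j` below a value of the counting function, some step topples `x`
exactly when its previous count is `j`. -/
lemma exists_cntAux_eq {V : Type*} [DecidableEq V] (a : ℕ → Option V) {x : V} {j N : ℕ}
    (h : j < cntAux a N x) : ∃ s, a s = some x ∧ cntAux a s x = j := by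
  classical
  have hP : ∃ s, j < cntAux a (s + 1) x := by
    cases N with
    | zero => simp [cntAux] at h
    | succ n => exact ⟨n, h⟩
  let s := Nat.find hP
  have hs : j < cntAux a (s + 1) x := Nat.find_spec hP
  have hlow : cntAux a s x ≤ j := by
    rcases Nat.eq_zero_or_pos s with h0 | h0
    · rw [h0]; simp [cntAux]
    · have := Nat.find_min hP (m := s - 1) (by omega)
      have hs1 : s - 1 + 1 = s := by omega
      rw [hs1] at this
      omega
  rw [cntAux_succ] at hs
  by_cases hax : a s = some x
  · refine ⟨s, hax, ?_⟩
    rw [if_pos hax] at hs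
    omega
  · rw [if_neg hax] at hs; omega

/-- On a finite connected graph, no legal complete toppling sequence can topple every
vertex at least once but only finitely often. -/
theorem no_all_once_finitely {V : Type*} [Fintype V] [DecidableEq V] (G : SimpleGraph V)
    [DecidableRel G.Adj] (hG : G.Connected) (c0 : V → ℤ) (a : ℕ → Option V)
    (hleg : LegalSeq (fun v => G.neighborFinset v) c0 a)
    (hcom : CompleteSeq (fun v => G.neighborFinset v) c0 a) :
    ¬ ((∀ x : V, ∃ n, a n = some x) ∧ (∀ x : V, {n | a n = some x}.Finite)) := by
  classical
  rintro ⟨h1, h2⟩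
  set succ : V → Finset V := fun v => G.neighborFinset v with hsucc
  -- a bound past all topplings
  have hfin : {n | ∃ x : V, a n = some x}.Finite := by
    have : {n | ∃ x : V, a n = some x} = ⋃ x : V, {n | a n = some x} := by
      ext n; simp [Set.mem_iUnion]
    rw [this]
    exact Set.finite_iUnion h2
  obtain ⟨N0, hN0⟩ := hfin.bddAbove
  set N := N0 + 1 with hNdef
  have hN : ∀ m, N ≤ m → a m = none := by
    intro m hm
    by_contra hne
    rcases Option.ne_none_iff_exists'.mp hne with ⟨x, hx⟩
    have : m ≤ N0 := hN0 ⟨x, hx⟩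
    omega
  -- counts stabilize at N
  set k : V → ℕ := fun x => cntAux a N x with hk
  have hstab : ∀ m, N ≤ m → ∀ x, cntAux a m x = k x := by
    intro m hm x
    refine le_antisymm ?_ (cntAux_mono a hm x)
    unfold cntAux
    apply Finset.card_le_card
    intro s hs
    simp only [Finset.mem_filter, Finset.mem_range] at hs ⊢
    refine ⟨?_, hs.2⟩
    by_contra hsN
    have := hN s (by omega)
    rw [this] at hs
    exact nomatch hs.2
  have hcle : ∀ m x, cntAux a m x ≤ k x := by
    intro m x
    rcases le_total m N with h | h
    · exact cntAux_mono a h x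
    · exact le_of_eq (hstab m h x)
  have hk1 : ∀ x, 1 ≤ k x := by
    intro x
    obtain ⟨n, hn⟩ := h1 x
    have hnN : n < N := by
      by_contra hc
      have := hN n (by omega)
      rw [this] at hn; exact nomatch hn
    have hpos : 0 < cntAux a N x := by
      apply Finset.card_pos.mpr
      exact ⟨n, by simp [Finset.mem_filter, Finset.mem_range, hnN, hn]⟩
    have hkx : k x = cntAux a N x := rfl
    omega
  -- the final configuration is stable
  have hstable : ∀ v, confAt succ c0 a N v < ((succ v).card : ℤ) := by
    intro v
    by_contra hc
    push_neg at hc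
    obtain ⟨m, hm, ham⟩ := hcom N v hc
    have := hN m hm
    rw [this] at ham
    exact nomatch ham
  -- budgets
  set u : V → ℕ := fun x => k x - 1 with hu
  have hu1 : ∀ x, u x + 1 = k x := fun x => by
    have h1 := hk1 x; have h2 : u x = k x - 1 := rfl; omega
  -- the first time the budget is met
  have hB : ∃ t, ∃ x, a t = some x ∧ u x ≤ cntAux a t x := by
    obtain ⟨x0⟩ := hG.nonempty
    obtain ⟨s, hs1, hs2⟩ := exists_cntAux_eq a (x := x0) (j := u x0) (N := N)
      (by have h1 := hu1 x0; have h2 : k x0 = cntAux a N x0 := rfl; omega)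
    exact ⟨s, x0, hs1, le_of_eq hs2.symm⟩
  let t := Nat.find hB
  obtain ⟨x, hax, hux⟩ : ∃ x, a t = some x ∧ u x ≤ cntAux a t x := Nat.find_spec hB
  -- at time t, every vertex is within budget
  have hall : ∀ v, cntAux a t v ≤ u v := by
    intro v
    by_contra hc
    push_neg at hc
    obtain ⟨s, hs1, hs2⟩ := exists_cntAux_eq a (x := v) (j := u v) (N := t) hc
    have hst : s < t := by
      by_contra hts
      have := cntAux_mono a (show t ≤ s by omega) v
      omega
    exact Nat.find_min hB hst ⟨v, hs1, le_of_eq hs2.symm⟩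
  -- legality: x unstable at time t
  have hunst : ((succ x).card : ℤ) ≤ confAt succ c0 a t x := hleg t x hax
  -- degree sum identity
  have hsum : (∑ v, (if x ∈ succ v then (1:ℤ) else 0)) = ((succ x).card : ℤ) := by
    rw [Finset.sum_boole]
    congr 2
    ext v
    simp [hsucc, SimpleGraph.mem_neighborFinset, SimpleGraph.adj_comm]
  -- key inequality: conf t x ≤ conf N x
  have hmain : confAt succ c0 a t x ≤ confAt succ c0 a N x := by
    rw [confAt_eq_s12, confAt_eq_s12]
    have hA : ∀ v, (0:ℤ) ≤ (if x ∈ succ v then (1:ℤ) else 0) := by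
      intro v; split <;> norm_num
    have hS : (∑ v, (cntAux a t v : ℤ) * (if x ∈ succ v then 1 else 0))
        + ((succ x).card : ℤ)
        ≤ ∑ v, (cntAux a N v : ℤ) * (if x ∈ succ v then 1 else 0) := by
      rw [← hsum, ← Finset.sum_add_distrib]
      apply Finset.sum_le_sum
      intro v _
      have h1v : (cntAux a t v : ℤ) + 1 ≤ (cntAux a N v : ℤ) := by
        have := hall v
        have := hu1 v
        have hNv : cntAux a N v = k v := by rw [hk]
        push_cast [hNv]
        omega
      nlinarith [hA v]
    have hkx : (cntAux a N x : ℤ) ≤ (cntAux a t x : ℤ) + 1 := by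
      have hNx : cntAux a N x = k x := by rw [hk]
      have := hu1 x
      push_cast [hNx]
      omega
    have hd : (0:ℤ) ≤ ((succ x).card : ℤ) := by positivity
    nlinarith
  have := hstable x
  omega
end
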